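/- Let m > 0 and N ≥ 2 an integer. For every real k ≠ 0: if l ≥ 0 is an even integer, then 0 ≤ S_l(k) ≤ 2π²(N−1)(m+1)·arcsin(1/(m+1)); if l ≥ 1 is an odd integer, then −4π(N−1)(m+1)·(1 − √(m(m+2))·arcsin(1/(m+1))) ≤ S_l(k) ≤ 0. -/

import Mathlib

/-- Legendre polynomial of degree `l` via Rodrigues' formula. -/
noncomputable def legendreP (l : ℕ) (y : ℝ) : ℝ :=
  (1 / (2 ^ l * (Nat.factorial l : ℝ))) * iteratedDeriv l (fun t : ℝ => (t ^ 2 - 1) ^ l) y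

/-- The function `S_l(k)` for `k ≠ 0`. -/
noncomputable def Sl (m : ℝ) (N l : ℕ) (k : ℝ) : ℝ :=
  2 * Real.pi ^ 2 * ((N : ℝ) - 1) *
    ∫ y in (-1 : ℝ)..(1 : ℝ),
      legendreP l y * Real.sinh (k * Real.arccos (y / (m + 1))) /
        (Real.sin (Real.arccos (y / (m + 1))) * Real.sinh (Real.pi * k))

/-!
With `a = 1 / (m + 1)` and `χ(y) = arcsin (a y)`, the identity `arccos = π / 2 - arcsin` splits the
kernel of `S_l(k)` as `F - G`, where `F = cosh (k χ) / (2 cosh (k π / 2) cos χ)` is even and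
`G = sinh (k χ) / (2 sinh (k π / 2) cos χ)` is odd (the kernel is even in `k`, so take `k > 0`).
By parity `∫ P_l G = 0` for even `l` and `∫ P_l F = 0` for odd `l`.

Rodrigues' formula and `l` integrations by parts give `∫ P_l f = (2^l l!)⁻¹ ∫ (1 - y²)^l f⁽ˡ⁾`.
The functions of `θ` built from `cosh (k θ)`, `sinh (k θ)`, `sec θ`, `tan θ` and nonnegative
constants by sums and products are nonnegative on `[0, π / 2)` and closed under differentiation
up to a factor `cos θ`, which `dχ/dy = a / cos χ` absorbs. Hence all derivatives of `F` and `G`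
are nonnegative on `[0, 1]`, and by parity the even ones of `F` and the odd ones of `G` are
nonnegative on `[-1, 1]`; this gives the signs. Two more integrations by parts show that the
normalised moment `(2^j j!)⁻¹ ∫ (1 - y²)^j f⁽ʲ⁾` does not increase from `j` to `j + 2`, so it is
bounded by `∫ F ≤ ∫ 1 / (2 cos χ)` for even `l` and by `∫ y G ≤ ∫ y χ / (π cos χ)` (convexity of
`sinh`) for odd `l`. Both integrals are elementary.
-/

open Real Set Polynomial intervalIntegral

inductive CoshSecCone (k : ℝ) : (ℝ → ℝ) → Prop
  | cosh : CoshSecCone k fun θ => Real.cosh (k * θ)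
  | sinh : CoshSecCone k fun θ => Real.sinh (k * θ)
  | sec : CoshSecCone k fun θ => (cos θ)⁻¹
  | tan : CoshSecCone k tan
  | const (c : ℝ) (hc : 0 ≤ c) : CoshSecCone k fun _ => c
  | add {f g : ℝ → ℝ} : CoshSecCone k f → CoshSecCone k g → CoshSecCone k fun θ => f θ + g θ
  | mul {f g : ℝ → ℝ} : CoshSecCone k f → CoshSecCone k g → CoshSecCone k fun θ => f θ * g θ

namespace CoshSecCone

variable {k : ℝ} {f : ℝ → ℝ}

theorem nonneg (hk : 0 ≤ k) (hf : CoshSecCone k f) {θ : ℝ} (h0 : 0 ≤ θ) (h1 : θ < π / 2) :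
    0 ≤ f θ := by
  have hcos : 0 < cos θ := cos_pos_of_mem_Ioo ⟨by linarith [pi_pos], h1⟩
  induction hf with
  | cosh => positivity
  | sinh => exact sinh_nonneg_iff.2 (by positivity)
  | sec => positivity
  | tan => exact tan_nonneg_of_nonneg_of_le_pi_div_two h0 h1.le
  | const c hc => exact hc
  | add _ _ ihf ihg => exact add_nonneg ihf ihg
  | mul _ _ ihf ihg => exact mul_nonneg ihf ihg

theorem exists_hasDerivAt_eq_mul_cos (hk : 0 ≤ k) (hf : CoshSecCone k f) :
    ∃ g, CoshSecCone k g ∧ ∀ θ ∈ Ioo (-(π / 2)) (π / 2), HasDerivAt f (g θ * cos θ) θ := by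
  induction hf with
  | cosh =>
    refine ⟨fun θ => k * Real.sinh (k * θ) * (cos θ)⁻¹, (const k hk).mul sinh |>.mul sec,
      fun θ hθ => ?_⟩
    have hcos := (cos_pos_of_mem_Ioo hθ).ne'
    convert (hasDerivAt_const_mul k (x := θ)).cosh using 1
    field_simp
  | sinh =>
    refine ⟨fun θ => k * Real.cosh (k * θ) * (cos θ)⁻¹, (const k hk).mul cosh |>.mul sec,
      fun θ hθ => ?_⟩
    have hcos := (cos_pos_of_mem_Ioo hθ).ne'
    convert (hasDerivAt_const_mul k (x := θ)).sinh using 1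
    field_simp
  | sec =>
    refine ⟨fun θ => Real.tan θ * ((cos θ)⁻¹ * (cos θ)⁻¹), tan.mul (sec.mul sec), fun θ hθ => ?_⟩
    have hcos := (cos_pos_of_mem_Ioo hθ).ne'
    have h : HasDerivAt (fun θ => (cos θ)⁻¹) (-(-sin θ) / cos θ ^ 2) θ :=
      (hasDerivAt_cos θ).inv hcos
    convert h using 1
    simp only [tan_eq_sin_div_cos]
    field_simp
  | tan =>
    refine ⟨fun θ => (cos θ)⁻¹ * ((cos θ)⁻¹ * (cos θ)⁻¹), sec.mul (sec.mul sec),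
      fun θ hθ => ?_⟩
    have hcos := (cos_pos_of_mem_Ioo hθ).ne'
    convert hasDerivAt_tan hcos using 1
    field_simp
  | const c _ => exact ⟨fun _ => 0, const 0 le_rfl, fun θ _ => by simpa using hasDerivAt_const θ c⟩
  | add _ _ ihf ihg =>
    obtain ⟨f', hf', hdf⟩ := ihf
    obtain ⟨g', hg', hdg⟩ := ihg
    exact ⟨fun θ => f' θ + g' θ, hf'.add hg', fun θ hθ =>
      ((hdf θ hθ).add (hdg θ hθ)).congr_deriv (by ring)⟩
  | @mul f g hf hg ihf ihg =>
    obtain ⟨f', hf', hdf⟩ := ihf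
    obtain ⟨g', hg', hdg⟩ := ihg
    exact ⟨fun θ => f' θ * g θ + f θ * g' θ, (hf'.mul hg).add (hf.mul hg'), fun θ hθ =>
      ((hdf θ hθ).mul (hdg θ hθ)).congr_deriv (by ring)⟩

end CoshSecCone

section Parity

variable {f : ℝ → ℝ}

theorem Function.Even.iteratedDeriv_neg (hf : f.Even) (n : ℕ) (x : ℝ) :
    iteratedDeriv n f (-x) = (-1) ^ n * iteratedDeriv n f x := by
  have h := iteratedDeriv_comp_neg n f (-x)
  rwa [show (fun x => f (-x)) = f from funext hf, neg_neg, smul_eq_mul] at h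

theorem Function.Odd.iteratedDeriv_neg (hf : f.Odd) (n : ℕ) (x : ℝ) :
    iteratedDeriv n f (-x) = -((-1) ^ n * iteratedDeriv n f x) := by
  have h := iteratedDeriv_comp_neg n f (-x)
  rw [show (fun x => f (-x)) = fun x => -f x from funext hf, iteratedDeriv_fun_neg, neg_neg,
    smul_eq_mul] at h
  rw [← h, neg_neg]

theorem Function.Even.iteratedDeriv_of_even (hf : f.Even) {n : ℕ} (hn : Even n) :
    (iteratedDeriv n f).Even := fun x => by
  rw [hf.iteratedDeriv_neg, hn.neg_one_pow, one_mul]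

theorem Function.Odd.iteratedDeriv_of_odd (hf : f.Odd) {n : ℕ} (hn : Odd n) :
    (iteratedDeriv n f).Even := fun x => by
  rw [hf.iteratedDeriv_neg, hn.neg_one_pow, neg_one_mul, neg_neg]

theorem Function.Odd.intervalIntegral_eq_zero (hf : f.Odd) (a : ℝ) : ∫ x in -a..a, f x = 0 := by
  have h := intervalIntegral.integral_comp_neg (a := -a) (b := a) f
  simp only [hf.eq, neg_neg, intervalIntegral.integral_neg] at h
  linarith

theorem Function.Even.nonneg_of_nonneg_on_Icc (hf : f.Even) {c : ℝ}
    (h : ∀ y ∈ Icc 0 c, 0 ≤ f y) : ∀ y ∈ Icc (-c) c, 0 ≤ f y := by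
  intro y hy
  rcases le_total 0 y with hy0 | hy0
  · exact h y ⟨hy0, hy.2⟩
  · rw [← hf.eq]
    exact h (-y) ⟨neg_nonneg.2 hy0, neg_le.1 hy.1⟩

theorem legendreP_neg (l : ℕ) (y : ℝ) : legendreP l (-y) = (-1) ^ l * legendreP l y := by
  have hψ : (fun t : ℝ => (t ^ 2 - 1) ^ l).Even := fun t => by simp only [neg_sq]
  simp only [legendreP, hψ.iteratedDeriv_neg]
  ring

theorem legendreP_even {l : ℕ} (hl : Even l) : (legendreP l).Even := fun y => by
  rw [legendreP_neg, hl.neg_one_pow, one_mul]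

theorem legendreP_odd {l : ℕ} (hl : Odd l) : (legendreP l).Odd := fun y => by
  rw [legendreP_neg, hl.neg_one_pow, neg_one_mul]

end Parity

section ArcsinMul

variable {k a : ℝ} {f : ℝ → ℝ}

theorem arcsin_mem_Ioo {x : ℝ} (hx : x ∈ Ioo (-1) 1) : arcsin x ∈ Ioo (-(π / 2)) (π / 2) :=
  ⟨neg_pi_div_two_lt_arcsin.2 hx.1, arcsin_lt_pi_div_two.2 hx.2⟩

theorem hasDerivAt_arcsin_mul {y : ℝ} (hy : a * y ∈ Ioo (-1) 1) :
    HasDerivAt (fun y => arcsin (a * y)) (a * (cos (arcsin (a * y)))⁻¹) y := by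
  refine ((hasDerivAt_arcsin hy.1.ne' hy.2.ne).comp y (hasDerivAt_const_mul a)).congr_deriv ?_
  rw [cos_arcsin]
  ring

theorem hasDerivAt_comp_arcsin_mul {g g' : ℝ → ℝ}
    (hg : ∀ θ ∈ Ioo (-(π / 2)) (π / 2), HasDerivAt g (g' θ * cos θ) θ) {y : ℝ}
    (hy : a * y ∈ Ioo (-1) 1) :
    HasDerivAt (fun y => g (arcsin (a * y))) (a * g' (arcsin (a * y))) y := by
  have hcos := (cos_pos_of_mem_Ioo (arcsin_mem_Ioo hy)).ne'
  refine ((hg _ (arcsin_mem_Ioo hy)).comp y (hasDerivAt_arcsin_mul hy)).congr_deriv ?_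
  field_simp

theorem isOpen_preimage_const_mul_Ioo (a : ℝ) : IsOpen ((a * ·) ⁻¹' Ioo (-1 : ℝ) 1) :=
  isOpen_Ioo.preimage (continuous_const_mul a)

theorem const_mul_mem_Ioo (ha0 : 0 ≤ a) (ha1 : a < 1) {y : ℝ} (hy : y ∈ Icc (-1) 1) :
    a * y ∈ Ioo (-1) 1 := by
  have := abs_le.2 hy
  rw [mem_Ioo, ← abs_lt, abs_mul, abs_of_nonneg ha0]
  nlinarith [abs_nonneg y]

theorem cos_arcsin_const_mul_pos (ha0 : 0 ≤ a) (ha1 : a < 1) {y : ℝ} (hy : y ∈ Icc (-1) 1) :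
    0 < cos (arcsin (a * y)) :=
  cos_pos_of_mem_Ioo (arcsin_mem_Ioo (const_mul_mem_Ioo ha0 ha1 hy))

namespace CoshSecCone

-- The factor `cos θ` of `exists_hasDerivAt_eq_mul_cos` cancels against `d/dy arcsin (a y)`.
theorem exists_iteratedDeriv_comp_arcsin_mul_eqOn (hk : 0 ≤ k) (hf : CoshSecCone k f) (l : ℕ) :
    ∃ g, CoshSecCone k g ∧ EqOn (iteratedDeriv l fun y => f (arcsin (a * y)))
      (fun y => a ^ l * g (arcsin (a * y))) ((a * ·) ⁻¹' Ioo (-1) 1) := by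
  induction l with
  | zero => exact ⟨f, hf, fun y _ => by simp⟩
  | succ l ih =>
    obtain ⟨g, hg, heq⟩ := ih
    obtain ⟨g', hg', hdg⟩ := hg.exists_hasDerivAt_eq_mul_cos hk
    refine ⟨g', hg', fun y hy => ?_⟩
    rw [iteratedDeriv_succ,
      (heq.eventuallyEq_of_mem ((isOpen_preimage_const_mul_Ioo a).mem_nhds hy)).deriv_eq,
      ((hasDerivAt_comp_arcsin_mul hdg hy).const_mul (a ^ l)).deriv]
    ring

theorem differentiableAt_iteratedDeriv_comp_arcsin_mul (hk : 0 ≤ k) (hf : CoshSecCone k f)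
    (l : ℕ) {y : ℝ} (hy : a * y ∈ Ioo (-1) 1) :
    DifferentiableAt ℝ (iteratedDeriv l fun y => f (arcsin (a * y))) y := by
  obtain ⟨g, hg, heq⟩ := hf.exists_iteratedDeriv_comp_arcsin_mul_eqOn hk l (a := a)
  obtain ⟨g', -, hdg⟩ := hg.exists_hasDerivAt_eq_mul_cos hk
  have hnhds := (isOpen_preimage_const_mul_Ioo a).mem_nhds hy
  exact ((hasDerivAt_comp_arcsin_mul hdg hy).const_mul (a ^ l)).differentiableAt
    |>.congr_of_eventuallyEq (heq.eventuallyEq_of_mem hnhds)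

theorem iteratedDeriv_comp_arcsin_mul_nonneg (hk : 0 ≤ k) (ha : 0 ≤ a) (hf : CoshSecCone k f)
    (l : ℕ) {y : ℝ} (hy0 : 0 ≤ y) (hy1 : a * y < 1) :
    0 ≤ iteratedDeriv l (fun y => f (arcsin (a * y))) y := by
  obtain ⟨g, hg, heq⟩ := hf.exists_iteratedDeriv_comp_arcsin_mul_eqOn hk l (a := a)
  have hay : 0 ≤ a * y := mul_nonneg ha hy0
  rw [heq ⟨by linarith, hy1⟩]
  exact mul_nonneg (pow_nonneg ha l)
    (hg.nonneg hk (arcsin_nonneg.2 hay) (arcsin_lt_pi_div_two.2 hy1))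

theorem differentiableAt_iteratedDeriv_comp_arcsin_mul_of_mem_Icc (hk : 0 ≤ k) (ha0 : 0 ≤ a)
    (ha1 : a < 1) (hf : CoshSecCone k f) (j : ℕ) :
    ∀ y ∈ Icc (-1 : ℝ) 1, DifferentiableAt ℝ (iteratedDeriv j fun y => f (arcsin (a * y))) y :=
  fun _ hy => hf.differentiableAt_iteratedDeriv_comp_arcsin_mul hk j (const_mul_mem_Ioo ha0 ha1 hy)

theorem continuousOn_comp_arcsin_mul (hk : 0 ≤ k) (ha0 : 0 ≤ a) (ha1 : a < 1)
    (hf : CoshSecCone k f) :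
    ContinuousOn (fun y => f (arcsin (a * y))) (Icc (-1) 1) := fun y hy => by
  simpa using (hf.differentiableAt_iteratedDeriv_comp_arcsin_mul_of_mem_Icc hk ha0 ha1 0 y
    hy).continuousAt.continuousWithinAt

theorem iteratedDeriv_comp_arcsin_mul_nonneg_of_even (hk : 0 ≤ k) (ha0 : 0 ≤ a) (ha1 : a < 1)
    (hf : CoshSecCone k f) {j : ℕ} (heven : (iteratedDeriv j fun y => f (arcsin (a * y))).Even) :
    ∀ y ∈ Icc (-1 : ℝ) 1, 0 ≤ iteratedDeriv j (fun y => f (arcsin (a * y))) y :=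
  heven.nonneg_of_nonneg_on_Icc fun y hy =>
    hf.iteratedDeriv_comp_arcsin_mul_nonneg hk ha0 j hy.1 (by nlinarith [hy.2])

end CoshSecCone

end ArcsinMul

theorem Polynomial.iteratedDeriv_eval (p : ℝ[X]) (i : ℕ) :
    iteratedDeriv i (fun t => p.eval t) = fun t => (derivative^[i] p).eval t := by
  induction i with
  | zero => simp
  | succ i ih =>
    rw [iteratedDeriv_succ, ih, Function.iterate_succ_apply']
    funext t
    exact Polynomial.deriv _

theorem legendreP_eq_eval (l : ℕ) :
    legendreP l = fun y => (2 ^ l * (l.factorial : ℝ))⁻¹ *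
      (derivative^[l] ((X ^ 2 - 1 : ℝ[X]) ^ l)).eval y := by
  have hψ : (fun t : ℝ => (t ^ 2 - 1) ^ l) = fun t => ((X ^ 2 - 1 : ℝ[X]) ^ l).eval t := by
    simp
  funext y
  rw [legendreP, one_div, hψ, Polynomial.iteratedDeriv_eval]

theorem continuous_legendreP (l : ℕ) : Continuous (legendreP l) := by
  rw [legendreP_eq_eval]
  exact continuous_const.mul (Polynomial.continuous _)

theorem eval_iterate_derivative_eq_zero_of_dvd {p : ℝ[X]} {n i : ℕ} (hp : (X ^ 2 - 1) ^ n ∣ p)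
    (hi : i < n) {y : ℝ} (hy : y ^ 2 = 1) : (derivative^[i] p).eval y = 0 := by
  obtain ⟨q, hq⟩ := pow_sub_dvd_iterate_derivative_of_pow_dvd i hp
  rw [hq, eval_mul, eval_pow]
  simp [hy, zero_pow (Nat.sub_ne_zero_of_lt hi)]

section LegendreMoment

variable {f : ℝ → ℝ}

theorem integral_iterate_derivative_eval_mul
    (hf : ∀ j, ∀ y ∈ Icc (-1 : ℝ) 1, DifferentiableAt ℝ (iteratedDeriv j f) y) (j n : ℕ)
    {p : ℝ[X]} (hp : (X ^ 2 - 1) ^ n ∣ p) :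
    ∫ y in (-1 : ℝ)..1, (derivative^[n] p).eval y * iteratedDeriv j f y =
      (-1) ^ n * ∫ y in (-1 : ℝ)..1, p.eval y * iteratedDeriv (j + n) f y := by
  induction n generalizing p with
  | zero => simp
  | succ n ih =>
    have hIcc : uIcc (-1 : ℝ) 1 = Icc (-1) 1 := uIcc_of_le (by norm_num)
    have hdp : (X ^ 2 - 1) ^ n ∣ derivative p := by
      simpa using pow_sub_dvd_iterate_derivative_of_pow_dvd 1 hp
    have hv : ∀ y ∈ uIcc (-1 : ℝ) 1,
        HasDerivAt (iteratedDeriv (j + n) f) (iteratedDeriv (j + (n + 1)) f y) y := fun y hy => by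
      rw [← add_assoc, iteratedDeriv_succ]
      exact (hf _ y (hIcc ▸ hy)).hasDerivAt
    have hv' : ContinuousOn (iteratedDeriv (j + (n + 1)) f) (uIcc (-1) 1) :=
      fun y hy => (hf _ y (hIcc ▸ hy)).continuousAt.continuousWithinAt
    have hibp := integral_mul_deriv_eq_deriv_mul (fun y _ => p.hasDerivAt y) hv
      (p.derivative.continuous.intervalIntegrable _ _) hv'.intervalIntegrable
    have hp1 : p.eval 1 = 0 :=
      eval_iterate_derivative_eq_zero_of_dvd (i := 0) hp n.succ_pos (by norm_num)
    have hp2 : p.eval (-1) = 0 :=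
      eval_iterate_derivative_eq_zero_of_dvd (i := 0) hp n.succ_pos (by norm_num)
    rw [Function.iterate_succ_apply, ih hdp, hibp, hp1, hp2]
    ring

noncomputable def legendreMoment (f : ℝ → ℝ) (j : ℕ) : ℝ :=
  (2 ^ j * (j.factorial : ℝ))⁻¹ * ∫ y in (-1 : ℝ)..1, (1 - y ^ 2) ^ j * iteratedDeriv j f y

theorem integral_legendreP_mul
    (hf : ∀ j, ∀ y ∈ Icc (-1 : ℝ) 1, DifferentiableAt ℝ (iteratedDeriv j f) y) (l : ℕ) :
    ∫ y in (-1 : ℝ)..1, legendreP l y * f y = legendreMoment f l := by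
  have hibp := integral_iterate_derivative_eval_mul hf 0 l (dvd_refl ((X ^ 2 - 1 : ℝ[X]) ^ l))
  simp only [iteratedDeriv_zero] at hibp
  simp only [legendreP_eq_eval, mul_assoc, intervalIntegral.integral_const_mul, legendreMoment]
  rw [hibp, ← intervalIntegral.integral_const_mul]
  congr 2
  funext y
  simp only [zero_add, eval_pow, eval_sub, eval_X, eval_one, ← mul_assoc, ← mul_pow]
  ring_nf

theorem legendreMoment_zero : legendreMoment f 0 = ∫ y in (-1 : ℝ)..1, f y := by
  simp [legendreMoment]

theorem legendreMoment_one
    (hf : ∀ j, ∀ y ∈ Icc (-1 : ℝ) 1, DifferentiableAt ℝ (iteratedDeriv j f) y) :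
    legendreMoment f 1 = ∫ y in (-1 : ℝ)..1, y * f y := by
  have hibp := integral_iterate_derivative_eval_mul hf 0 1 (p := 1 - X ^ 2) ⟨-1, by ring⟩
  simp only [Function.iterate_one, derivative_sub, derivative_one, derivative_pow, Nat.cast_ofNat,
    Nat.add_one_sub_one, pow_one, derivative_X, mul_one, zero_sub, eval_neg, eval_mul, eval_C,
    eval_X, iteratedDeriv_zero, neg_mul, integral_neg, eval_sub, eval_one, eval_pow, zero_add,
    iteratedDeriv_one, one_mul, neg_inj] at hibp
  simp only [legendreMoment, pow_one, iteratedDeriv_one, Nat.factorial_one, Nat.cast_one, mul_one,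
    ← hibp, mul_assoc, intervalIntegral.integral_const_mul]
  ring

theorem legendreMoment_nonneg {j : ℕ} (hpos : ∀ y ∈ Icc (-1 : ℝ) 1, 0 ≤ iteratedDeriv j f y) :
    0 ≤ legendreMoment f j := by
  refine mul_nonneg (by positivity) (intervalIntegral.integral_nonneg (by norm_num) fun y hy => ?_)
  have : 0 ≤ 1 - y ^ 2 := by nlinarith [hy.1, hy.2]
  exact mul_nonneg (pow_nonneg this j) (hpos y hy)

theorem eval_iterate_derivative_two_one_sub_X_sq_pow (j : ℕ) (y : ℝ) :
    (derivative^[2] ((1 - X ^ 2 : ℝ[X]) ^ (j + 2))).eval y =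
      (1 - y ^ 2) ^ j * (4 * (j + 2) * (j + 1) * y ^ 2 - 2 * (j + 2) * (1 - y ^ 2)) := by
  simp only [Function.iterate_succ_apply, Function.iterate_zero_apply, derivative_pow,
    derivative_mul, derivative_sub, derivative_one, derivative_X, derivative_zero, derivative_C,
    eval_add, eval_sub, eval_mul, eval_pow, eval_C, eval_X, eval_one, eval_zero]
  push_cast [add_tsub_cancel_right]
  ring

theorem one_sub_sq_pow_mul_le {j : ℕ} {y : ℝ} (hy : y ∈ Icc (-1 : ℝ) 1) :
    (1 - y ^ 2) ^ j * (4 * (j + 2) * (j + 1) * y ^ 2 - 2 * (j + 2) * (1 - y ^ 2)) ≤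
      4 * (j + 2) * (j + 1) * (1 - y ^ 2) ^ j := by
  have hy2 : 0 ≤ 1 - y ^ 2 := by nlinarith [hy.1, hy.2]
  have hw : 4 * (j + 2) * (j + 1) * y ^ 2 - 2 * (j + 2) * (1 - y ^ 2) ≤
      4 * ((j : ℝ) + 2) * (j + 1) := by
    nlinarith [mul_nonneg (by positivity : (0 : ℝ) ≤ 4 * (j + 2) * (j + 1) + 2 * (j + 2)) hy2]
  exact (mul_le_mul_of_nonneg_left hw (pow_nonneg hy2 j)).trans_eq (mul_comm _ _)

theorem legendreMoment_add_two_le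
    (hf : ∀ j, ∀ y ∈ Icc (-1 : ℝ) 1, DifferentiableAt ℝ (iteratedDeriv j f) y) {j : ℕ}
    (hpos : ∀ y ∈ Icc (-1 : ℝ) 1, 0 ≤ iteratedDeriv j f y) :
    legendreMoment f (j + 2) ≤ legendreMoment f j := by
  have hcont : ContinuousOn (iteratedDeriv j f) (Icc (-1) 1) :=
    fun y hy => (hf j y hy).continuousAt.continuousWithinAt
  have hibp := integral_iterate_derivative_eval_mul hf j 2 (p := (1 - X ^ 2) ^ (j + 2))
    ⟨(1 - X ^ 2) ^ j, by ring⟩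
  simp only [eval_iterate_derivative_two_one_sub_X_sq_pow, eval_pow, eval_sub, eval_one, eval_X,
    neg_one_sq, one_mul] at hibp
  have hle : ∫ y in (-1 : ℝ)..1,
        (1 - y ^ 2) ^ j * (4 * (j + 2) * (j + 1) * y ^ 2 - 2 * (j + 2) * (1 - y ^ 2)) *
          iteratedDeriv j f y ≤
      ∫ y in (-1 : ℝ)..1, 4 * (j + 2) * (j + 1) * (1 - y ^ 2) ^ j * iteratedDeriv j f y :=
    intervalIntegral.integral_mono_on (by norm_num)
      (((Continuous.continuousOn (by fun_prop)).mul hcont).intervalIntegrable_of_Icc (by norm_num))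
      (((Continuous.continuousOn (by fun_prop)).mul hcont).intervalIntegrable_of_Icc (by norm_num))
      fun y hy => mul_le_mul_of_nonneg_right (one_sub_sq_pow_mul_le hy) (hpos y hy)
  simp only [mul_assoc (4 * ((j : ℝ) + 2) * (j + 1)), intervalIntegral.integral_const_mul] at hle
  have hfac : (2 ^ (j + 2) * ((j + 2).factorial : ℝ)) =
      4 * (j + 2) * (j + 1) * (2 ^ j * j.factorial) := by
    push_cast [Nat.factorial_succ]
    ring
  calc legendreMoment f (j + 2) = (2 ^ j * (j.factorial : ℝ))⁻¹ *
        ((4 * ((j : ℝ) + 2) * (j + 1))⁻¹ * ∫ y in (-1 : ℝ)..1,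
          (1 - y ^ 2) ^ j * (4 * (j + 2) * (j + 1) * y ^ 2 - 2 * (j + 2) * (1 - y ^ 2)) *
            iteratedDeriv j f y) := by
        rw [legendreMoment, ← hibp, hfac, mul_inv]
        ring
    _ ≤ legendreMoment f j := by
        rw [legendreMoment]
        gcongr
        rwa [inv_mul_le_iff₀ (by positivity)]

theorem legendreMoment_add_two_mul_le
    (hf : ∀ j, ∀ y ∈ Icc (-1 : ℝ) 1, DifferentiableAt ℝ (iteratedDeriv j f) y) (j n : ℕ)
    (hpos : ∀ i < n, ∀ y ∈ Icc (-1 : ℝ) 1, 0 ≤ iteratedDeriv (j + 2 * i) f y) :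
    legendreMoment f (j + 2 * n) ≤ legendreMoment f j := by
  induction n with
  | zero => rfl
  | succ n ih =>
    calc legendreMoment f (j + 2 * (n + 1)) = legendreMoment f (j + 2 * n + 2) := by ring_nf
      _ ≤ legendreMoment f (j + 2 * n) := legendreMoment_add_two_le hf (hpos n n.lt_succ_self)
      _ ≤ legendreMoment f j := ih fun i hi => hpos i (by omega)

end LegendreMoment

section Profiles

variable {k a : ℝ}

theorem convexOn_sinh : ConvexOn ℝ (Ici 0) sinh :=
  convexOn_of_hasDerivWithinAt2_nonneg (convex_Ici 0) continuous_sinh.continuousOn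
    (fun x _ => (hasDerivAt_sinh x).hasDerivWithinAt)
    (fun x _ => (hasDerivAt_cosh x).hasDerivWithinAt)
    (fun _ hx => sinh_nonneg_iff.2 (interior_subset hx))

theorem sinh_mul_le_mul_sinh {t x : ℝ} (ht0 : 0 ≤ t) (ht1 : t ≤ 1) (hx : 0 ≤ x) :
    sinh (t * x) ≤ t * sinh x := by
  simpa using convexOn_sinh.2 (mem_Ici.2 le_rfl) (mem_Ici.2 hx) (sub_nonneg.2 ht1) ht0 (by ring)

noncomputable def coshProfile (k θ : ℝ) : ℝ :=
  (2 * cosh (k * (π / 2)))⁻¹ * (cosh (k * θ) * (cos θ)⁻¹)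

noncomputable def sinhProfile (k θ : ℝ) : ℝ :=
  (2 * sinh (k * (π / 2)))⁻¹ * (sinh (k * θ) * (cos θ)⁻¹)

theorem coshSecCone_coshProfile (k : ℝ) : CoshSecCone k (coshProfile k) :=
  (CoshSecCone.const _ (by positivity)).mul (CoshSecCone.cosh.mul CoshSecCone.sec)

theorem coshSecCone_sinhProfile (hk : 0 ≤ k) : CoshSecCone k (sinhProfile k) :=
  (CoshSecCone.const _ (inv_nonneg.2 (mul_nonneg zero_le_two (sinh_nonneg_iff.2 (by positivity)))))
    |>.mul (CoshSecCone.sinh.mul CoshSecCone.sec)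

theorem coshProfile_even : (coshProfile k).Even := fun θ => by
  simp only [coshProfile, mul_neg, cosh_neg, cos_neg]

theorem sinhProfile_odd : (sinhProfile k).Odd := fun θ => by
  simp only [sinhProfile, mul_neg, sinh_neg, cos_neg, neg_mul]

theorem arcsin_const_mul_odd (a : ℝ) : (fun y => arcsin (a * y)).Odd := fun y => by
  simp only [mul_neg, arcsin_neg]

-- `arccos x = π / 2 - arcsin x` and `sinh (π k) = 2 sinh (k π / 2) cosh (k π / 2)`.
theorem sinh_mul_arccos_div_eq (hk : k ≠ 0) (x : ℝ) :
    sinh (k * arccos x) / (sin (arccos x) * sinh (π * k)) =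
      coshProfile k (arcsin x) - sinhProfile k (arcsin x) := by
  have hs : sinh (k * (π / 2)) ≠ 0 := by
    rw [Ne, sinh_eq_zero]
    exact mul_ne_zero hk (by positivity)
  have hc := (cosh_pos (k * (π / 2))).ne'
  rw [arccos_eq_pi_div_two_sub_arcsin, sin_pi_div_two_sub, mul_sub, sinh_sub,
    show π * k = 2 * (k * (π / 2)) by ring, sinh_two_mul, coshProfile, sinhProfile]
  rcases eq_or_ne (cos (arcsin x)) 0 with hcos | hcos
  · simp [hcos]
  · field_simp

theorem coshProfile_le {θ : ℝ} (hθ : θ ∈ Icc (-(π / 2)) (π / 2)) :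
    coshProfile k θ ≤ (2 * cos θ)⁻¹ := by
  have hcos : 0 ≤ (cos θ)⁻¹ := inv_nonneg.2 (cos_nonneg_of_mem_Icc hθ)
  have hcosh : cosh (k * θ) ≤ cosh (k * (π / 2)) := by
    rw [cosh_le_cosh, abs_mul, abs_mul, abs_of_pos pi_div_two_pos]
    exact mul_le_mul_of_nonneg_left (abs_le.2 hθ) (abs_nonneg k)
  have hc := (cosh_pos (k * (π / 2))).ne'
  calc coshProfile k θ ≤ (2 * cosh (k * (π / 2)))⁻¹ * (cosh (k * (π / 2)) * (cos θ)⁻¹) := by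
        unfold coshProfile
        gcongr
    _ = (2 * cos θ)⁻¹ := by field_simp

-- Convexity of `sinh` on `[0, ∞)` gives `sinh (k θ) ≤ (2 θ / π) sinh (k π / 2)`.
theorem sinhProfile_le (hk : 0 < k) {θ : ℝ} (h0 : 0 ≤ θ) (h1 : θ ≤ π / 2) :
    sinhProfile k θ ≤ θ / π * (cos θ)⁻¹ := by
  have hcos : 0 ≤ (cos θ)⁻¹ := inv_nonneg.2 (cos_nonneg_of_mem_Icc ⟨by linarith [pi_pos], h1⟩)
  have hs : 0 < sinh (k * (π / 2)) := sinh_pos_iff.2 (by positivity)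
  have hsinh : sinh (k * θ) ≤ θ / (π / 2) * sinh (k * (π / 2)) := by
    have := sinh_mul_le_mul_sinh (x := k * (π / 2)) (div_nonneg h0 pi_div_two_pos.le)
      ((div_le_one pi_div_two_pos).2 h1) (by positivity)
    rwa [show θ / (π / 2) * (k * (π / 2)) = k * θ by field_simp] at this
  calc sinhProfile k θ ≤ (2 * sinh (k * (π / 2)))⁻¹ *
        (θ / (π / 2) * sinh (k * (π / 2)) * (cos θ)⁻¹) := by
        unfold sinhProfile
        gcongr
    _ = θ / π * (cos θ)⁻¹ := by field_simp

theorem mul_sinhProfile_arcsin_le (hk : 0 < k) (ha : 0 ≤ a) (y : ℝ) :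
    y * sinhProfile k (arcsin (a * y)) ≤
      y * (arcsin (a * y) / π * (cos (arcsin (a * y)))⁻¹) := by
  wlog hy : 0 ≤ y generalizing y
  · have h := this (-y) (by linarith)
    simp only [mul_neg, arcsin_neg, cos_neg, sinhProfile_odd.eq, neg_div] at h
    simpa only [neg_mul, mul_neg, neg_neg] using h
  exact mul_le_mul_of_nonneg_left
    (sinhProfile_le hk (arcsin_nonneg.2 (mul_nonneg ha hy)) (arcsin_le_pi_div_two _)) hy

end Profiles

section Integrals

variable {k a : ℝ}

theorem integral_inv_two_mul_cos_arcsin (ha0 : 0 < a) (ha1 : a < 1) :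
    ∫ y in (-1 : ℝ)..1, (2 * cos (arcsin (a * y)))⁻¹ = a⁻¹ * arcsin a := by
  have hIcc : uIcc (-1 : ℝ) 1 = Icc (-1) 1 := uIcc_of_le (by norm_num)
  have hcos : ∀ y ∈ uIcc (-1 : ℝ) 1, cos (arcsin (a * y)) ≠ 0 := fun y hy =>
    (cos_arcsin_const_mul_pos ha0.le ha1 (hIcc ▸ hy)).ne'
  rw [intervalIntegral.integral_eq_sub_of_hasDerivAt (f := fun y => (2 * a)⁻¹ * arcsin (a * y))]
  · simp only [mul_one, mul_neg, arcsin_neg]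
    field_simp
    ring
  · intro y hy
    have hay := const_mul_mem_Ioo ha0.le ha1 (hIcc ▸ hy)
    refine ((hasDerivAt_arcsin_mul hay).const_mul _).congr_deriv ?_
    field_simp
  · exact (ContinuousOn.inv₀ (by fun_prop) fun y hy =>
      mul_ne_zero two_ne_zero (hcos y hy)).intervalIntegrable

theorem integral_mul_arcsin_div_cos_arcsin (ha0 : 0 < a) (ha1 : a < 1) :
    ∫ y in (-1 : ℝ)..1, y * (arcsin (a * y) / π * (cos (arcsin (a * y)))⁻¹) =
      2 * (a - √(1 - a ^ 2) * arcsin a) / (π * a ^ 2) := by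
  have hIcc : uIcc (-1 : ℝ) 1 = Icc (-1) 1 := uIcc_of_le (by norm_num)
  have hcos : ∀ y ∈ uIcc (-1 : ℝ) 1, cos (arcsin (a * y)) ≠ 0 := fun y hy =>
    (cos_arcsin_const_mul_pos ha0.le ha1 (hIcc ▸ hy)).ne'
  rw [intervalIntegral.integral_eq_sub_of_hasDerivAt
    (f := fun y => (a * y - cos (arcsin (a * y)) * arcsin (a * y)) / (π * a ^ 2))]
  · simp only [mul_one, mul_neg, arcsin_neg, cos_neg, cos_arcsin]
    field_simp
    ring
  · intro y hy
    have hay := const_mul_mem_Ioo ha0.le ha1 (hIcc ▸ hy)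
    have hχ := hasDerivAt_arcsin_mul hay
    have hsin : sin (arcsin (a * y)) = a * y := sin_arcsin hay.1.le hay.2.le
    refine (((hasDerivAt_const_mul a).sub (hχ.cos.mul hχ)).div_const (π * a ^ 2)).congr_deriv ?_
    rw [hsin]
    field_simp [hcos y hy]
    ring
  · have hinv : ContinuousOn (fun y => (cos (arcsin (a * y)))⁻¹) (uIcc (-1) 1) :=
      ContinuousOn.inv₀ (by fun_prop) hcos
    exact (continuousOn_id.mul ((ContinuousOn.div_const (by fun_prop) π).mul hinv))
      |>.intervalIntegrable

end Integrals

section Coefficients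

variable {k a : ℝ} {l : ℕ}

theorem integral_legendreP_mul_coshProfile_bounds (ha0 : 0 < a) (ha1 : a < 1) (hk : 0 ≤ k)
    (hl : Even l) :
    0 ≤ ∫ y in (-1 : ℝ)..1, legendreP l y * coshProfile k (arcsin (a * y)) ∧
      ∫ y in (-1 : ℝ)..1, legendreP l y * coshProfile k (arcsin (a * y)) ≤ a⁻¹ * arcsin a := by
  have hF := coshSecCone_coshProfile k
  have hsmooth := hF.differentiableAt_iteratedDeriv_comp_arcsin_mul_of_mem_Icc hk ha0.le ha1
  have hpos (i : ℕ) := hF.iteratedDeriv_comp_arcsin_mul_nonneg_of_even hk ha0.le ha1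
    ((coshProfile_even.comp_odd (arcsin_const_mul_odd a)).iteratedDeriv_of_even
      (by simp : Even (0 + 2 * i)))
  obtain ⟨n, rfl⟩ : ∃ n, l = 0 + 2 * n := ⟨l / 2, by rcases hl with ⟨r, rfl⟩; omega⟩
  rw [integral_legendreP_mul hsmooth]
  refine ⟨legendreMoment_nonneg (hpos n),
    (legendreMoment_add_two_mul_le hsmooth 0 n fun i _ => hpos i).trans ?_⟩
  rw [legendreMoment_zero, ← integral_inv_two_mul_cos_arcsin ha0 ha1]
  refine intervalIntegral.integral_mono_on (by norm_num) ?_ ?_ fun y _ =>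
    coshProfile_le (arcsin_mem_Icc _)
  · exact (hF.continuousOn_comp_arcsin_mul hk ha0.le ha1).intervalIntegrable_of_Icc (by norm_num)
  · exact (ContinuousOn.inv₀ (by fun_prop) fun y hy =>
      (mul_pos two_pos (cos_arcsin_const_mul_pos ha0.le ha1 hy)).ne').intervalIntegrable_of_Icc
        (by norm_num)

theorem integral_legendreP_mul_sinhProfile_bounds (ha0 : 0 < a) (ha1 : a < 1) (hk : 0 < k)
    (hl : Odd l) :
    0 ≤ ∫ y in (-1 : ℝ)..1, legendreP l y * sinhProfile k (arcsin (a * y)) ∧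
      ∫ y in (-1 : ℝ)..1, legendreP l y * sinhProfile k (arcsin (a * y)) ≤
        2 * (a - √(1 - a ^ 2) * arcsin a) / (π * a ^ 2) := by
  have hG := coshSecCone_sinhProfile hk.le
  have hsmooth := hG.differentiableAt_iteratedDeriv_comp_arcsin_mul_of_mem_Icc hk.le ha0.le ha1
  have hpos (i : ℕ) := hG.iteratedDeriv_comp_arcsin_mul_nonneg_of_even hk.le ha0.le ha1
    ((sinhProfile_odd.comp_odd (arcsin_const_mul_odd a)).iteratedDeriv_of_odd
      (by simp : Odd (1 + 2 * i)))
  obtain ⟨n, rfl⟩ : ∃ n, l = 1 + 2 * n := ⟨l / 2, by rcases hl with ⟨r, rfl⟩; omega⟩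
  rw [integral_legendreP_mul hsmooth]
  refine ⟨legendreMoment_nonneg (hpos n),
    (legendreMoment_add_two_mul_le hsmooth 1 n fun i _ => hpos i).trans ?_⟩
  rw [legendreMoment_one hsmooth, ← integral_mul_arcsin_div_cos_arcsin ha0 ha1]
  refine intervalIntegral.integral_mono_on (by norm_num) ?_ ?_ fun y _ =>
    mul_sinhProfile_arcsin_le hk ha0.le y
  · exact (continuousOn_id.mul (hG.continuousOn_comp_arcsin_mul hk.le ha0.le ha1))
      |>.intervalIntegrable_of_Icc (by norm_num)
  · exact (continuousOn_id.mul ((ContinuousOn.div_const (by fun_prop) π).mul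
      (ContinuousOn.inv₀ (by fun_prop) fun y hy =>
        (cos_arcsin_const_mul_pos ha0.le ha1 hy).ne'))).intervalIntegrable_of_Icc (by norm_num)

end Coefficients

section Assembly

variable {k : ℝ} {m : ℝ} {l : ℕ}

theorem integral_legendreP_mul_sinhProfile_eq_zero (a : ℝ) (hl : Even l) :
    ∫ y in (-1 : ℝ)..1, legendreP l y * sinhProfile k (arcsin (a * y)) = 0 :=
  ((legendreP_even hl).mul_odd (sinhProfile_odd.comp_odd (arcsin_const_mul_odd a)))
    |>.intervalIntegral_eq_zero 1

theorem integral_legendreP_mul_coshProfile_eq_zero (a : ℝ) (hl : Odd l) :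
    ∫ y in (-1 : ℝ)..1, legendreP l y * coshProfile k (arcsin (a * y)) = 0 :=
  ((legendreP_odd hl).mul_even (coshProfile_even.comp_odd (arcsin_const_mul_odd a)))
    |>.intervalIntegral_eq_zero 1

theorem Sl_neg (m : ℝ) (N l : ℕ) (k : ℝ) : Sl m N l (-k) = Sl m N l k := by
  simp only [Sl, neg_mul, sinh_neg, mul_neg, neg_div_neg_eq]

theorem Sl_eq_sub (hm : 0 < m) (hk : 0 < k) (N : ℕ) :
    Sl m N l k = 2 * π ^ 2 * ((N : ℝ) - 1) *
      ((∫ y in (-1 : ℝ)..1, legendreP l y * coshProfile k (arcsin ((m + 1)⁻¹ * y))) -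
        ∫ y in (-1 : ℝ)..1, legendreP l y * sinhProfile k (arcsin ((m + 1)⁻¹ * y))) := by
  have ha0 : 0 ≤ (m + 1)⁻¹ := by positivity
  have ha1 : (m + 1)⁻¹ < 1 := inv_lt_one_of_one_lt₀ (by linarith)
  have hP := (continuous_legendreP l).continuousOn (s := Icc (-1) 1)
  rw [Sl, ← intervalIntegral.integral_sub]
  · congr 1
    refine intervalIntegral.integral_congr fun y _ => ?_
    simp only [div_eq_inv_mul y, mul_div_assoc, sinh_mul_arccos_div_eq hk.ne', mul_sub]
  · exact (hP.mul ((coshSecCone_coshProfile k).continuousOn_comp_arcsin_mul hk.le ha0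
      ha1)).intervalIntegrable_of_Icc (by norm_num)
  · exact (hP.mul ((coshSecCone_sinhProfile hk.le).continuousOn_comp_arcsin_mul hk.le ha0
      ha1)).intervalIntegrable_of_Icc (by norm_num)

theorem sqrt_one_sub_inv_sq (hm : 0 < m) :
    √(1 - ((m + 1)⁻¹) ^ 2) = √(m * (m + 2)) * (m + 1)⁻¹ := by
  have h : 1 - ((m + 1)⁻¹) ^ 2 = m * (m + 2) * ((m + 1)⁻¹) ^ 2 := by
    field_simp
    ring
  rw [h, Real.sqrt_mul (by positivity), Real.sqrt_sq (by positivity)]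

end Assembly

/-- Bounds for `S_l(k)`, `k ≠ 0`: for even `l`, `0 ≤ S_l(k) ≤ 2π²(N−1)(m+1)·arcsin(1/(m+1))`;
for odd `l`, `−4π(N−1)(m+1)(1−√(m(m+2))·arcsin(1/(m+1))) ≤ S_l(k) ≤ 0`. -/
theorem stmt16 (m : ℝ) (hm : 0 < m) (N : ℕ) (hN : 2 ≤ N) (k : ℝ) (hk : k ≠ 0) (l : ℕ) :
    (Even l →
      0 ≤ Sl m N l k ∧
      Sl m N l k ≤ 2 * Real.pi ^ 2 * ((N : ℝ) - 1) * (m + 1) * Real.arcsin (1 / (m + 1))) ∧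
    (Odd l →
      -(4 * Real.pi * ((N : ℝ) - 1) * (m + 1) *
          (1 - Real.sqrt (m * (m + 2)) * Real.arcsin (1 / (m + 1)))) ≤ Sl m N l k ∧
      Sl m N l k ≤ 0) := by
  wlog hk' : 0 < k generalizing k
  · simpa only [Sl_neg] using
      this (-k) (neg_ne_zero.2 hk) (neg_pos.2 (lt_of_le_of_ne (not_lt.1 hk') hk))
  have ha0 : 0 < (m + 1)⁻¹ := by positivity
  have ha1 : (m + 1)⁻¹ < 1 := inv_lt_one_of_one_lt₀ (by linarith)
  have hC : 0 ≤ 2 * π ^ 2 * ((N : ℝ) - 1) := by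
    have : (2 : ℝ) ≤ N := by exact_mod_cast hN
    have : (0 : ℝ) ≤ N - 1 := by linarith
    positivity
  rw [one_div, Sl_eq_sub hm hk']
  refine ⟨fun hl => ?_, fun hl => ?_⟩
  · obtain ⟨h0, h1⟩ := integral_legendreP_mul_coshProfile_bounds ha0 ha1 hk'.le hl
    rw [integral_legendreP_mul_sinhProfile_eq_zero _ hl, sub_zero]
    refine ⟨mul_nonneg hC h0, (mul_le_mul_of_nonneg_left h1 hC).trans_eq ?_⟩
    rw [inv_inv]
    ring
  · obtain ⟨h0, h1⟩ := integral_legendreP_mul_sinhProfile_bounds ha0 ha1 hk' hl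
    rw [integral_legendreP_mul_coshProfile_eq_zero _ hl, zero_sub, mul_neg]
    refine ⟨neg_le_neg ((mul_le_mul_of_nonneg_left h1 hC).trans_eq ?_),
      neg_nonpos.2 (mul_nonneg hC h0)⟩
    rw [sqrt_one_sub_inv_sq hm]
    field_simp
    ring
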